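/- arXiv:1709.04282 — 5 statements merged into one kernel-verified Lean document; each statement's English description precedes it below -/
import Mathlib

section
/- For every integer n ≥ 2 and every real data vector (f_r)_{r=-n+1}^{n}, the function R(β₀,β₁,β₂,β₃) = ∑_{r=-n+1}^{n} (f_r − β₀ − β₁ r − β₂ r² − β₃ r³)² attains its unique global minimum over ℝ⁴ at the point defined by β₃ = ∑_{r=-n+1}^{n} [35(10r³ − 15r² + 11r − 6n²r + 3n² − 3)/(n(n²−1)(4n²−1)(4n²−9))] f_r, β₂ = ∑_{r=-n+1}^{n} [15(3r² − 3r − n² + 1)/(2n(n²−1)(4n²−1))] f_r − (3/2)β₃, β₁ = ∑_{r=-n+1}^{n} [3(2r−1)/(n(4n²−1))] f_r − β₂ − (1/5)(3n²+2)β₃, and β₀ = (1/(2n)) ∑_{r=-n+1}^{n} f_r − (1/2)β₁ − (1/6)(2n²+1)β₂ − (n²/2)β₃. (Proposition 2.1) -/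
/-! The proposed coefficients satisfy the normal equations `∑ (f r - p r) * r ^ k = 0`, `k ≤ 3`:
written through the moments `∑ r ^ k * f r` and the power sums of `-n+1, …, n` (which telescope),
these become rational identities in `n`. Hence the residual of the fitted cubic `p` is orthogonal
to every cubic, so for any other cubic `q` the residual sum of squares of `q` exceeds that of `p`
by `∑ (p r - q r) ^ 2`, which is positive because the nonzero cubic `p - q` cannot vanish at all
`2n ≥ 4` nodes. -/

open Finset Polynomial

theorem Cubic.eq_zero_of_eval_eq_zero {R ι : Type*} [CommRing R] [IsDomain R] (P : Cubic R)
    (s : Finset ι) (x : ι → R) (hx : Set.InjOn x s) (hs : 4 ≤ #s)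
    (h : ∀ i ∈ s, P.toPoly.eval (x i) = 0) : P = 0 := by
  classical
  rw [← P.toPoly_eq_zero_iff]
  refine eq_zero_of_natDegree_lt_card_of_eval_eq_zero' _ (s.image x) (by simpa using h) ?_
  rw [card_image_of_injOn hx]
  exact natDegree_cubic_le.trans_lt hs

theorem Finset.sum_add_sq_eq_of_sum_mul_eq_zero {ι : Type*} (s : Finset ι) (e d : ι → ℝ)
    (h : ∑ i ∈ s, e i * d i = 0) :
    ∑ i ∈ s, (e i + d i) ^ 2 = ∑ i ∈ s, e i ^ 2 + ∑ i ∈ s, d i ^ 2 := by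
  have hexpand : ∀ i ∈ s, (e i + d i) ^ 2 = e i ^ 2 + 2 * (e i * d i) + d i ^ 2 :=
    fun i _ => by ring
  rw [sum_congr rfl hexpand, sum_add_distrib, sum_add_distrib, ← mul_sum, h, mul_zero, add_zero]

theorem sum_sq_cubic_residual_lt {ι : Type*} (s : Finset ι) (x f : ι → ℝ) (hx : Set.InjOn x s)
    (hs : 4 ≤ #s) {β0 β1 β2 β3 : ℝ}
    (hnormal : ∀ k ≤ 3,
      ∑ i ∈ s, (f i - β0 - β1 * x i - β2 * x i ^ 2 - β3 * x i ^ 3) * x i ^ k = 0)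
    {b0 b1 b2 b3 : ℝ} (hne : (b0, b1, b2, b3) ≠ (β0, β1, β2, β3)) :
    ∑ i ∈ s, (f i - β0 - β1 * x i - β2 * x i ^ 2 - β3 * x i ^ 3) ^ 2 <
      ∑ i ∈ s, (f i - b0 - b1 * x i - b2 * x i ^ 2 - b3 * x i ^ 3) ^ 2 := by
  set e := fun i => f i - β0 - β1 * x i - β2 * x i ^ 2 - β3 * x i ^ 3
  let P : Cubic ℝ := ⟨β3 - b3, β2 - b2, β1 - b1, β0 - b0⟩
  have hP : ∀ i, P.toPoly.eval (x i)
      = (β3 - b3) * x i ^ 3 + (β2 - b2) * x i ^ 2 + (β1 - b1) * x i + (β0 - b0) := by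
    simp [P, Cubic.toPoly]
  have horth : ∑ i ∈ s, e i * P.toPoly.eval (x i) = 0 := by
    have h0 := hnormal 0 (by norm_num)
    have h1 := hnormal 1 (by norm_num)
    have h2 := hnormal 2 (by norm_num)
    have h3 := hnormal 3 (by norm_num)
    calc ∑ i ∈ s, e i * P.toPoly.eval (x i)
        = (β3 - b3) * ∑ i ∈ s, e i * x i ^ 3 + (β2 - b2) * ∑ i ∈ s, e i * x i ^ 2
          + (β1 - b1) * ∑ i ∈ s, e i * x i ^ 1 + (β0 - b0) * ∑ i ∈ s, e i * x i ^ 0 := by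
          simp only [hP, mul_sum, ← sum_add_distrib]
          exact sum_congr rfl fun i _ => by ring
      _ = 0 := by rw [h0, h1, h2, h3]; ring
  have hpos : 0 < ∑ i ∈ s, P.toPoly.eval (x i) ^ 2 := by
    refine (sum_nonneg fun i _ => sq_nonneg _).lt_of_ne fun hzero => hne ?_
    have hvanish : ∀ i ∈ s, P.toPoly.eval (x i) = 0 := fun i hi =>
      pow_eq_zero_iff two_ne_zero |>.mp <|
        (sum_eq_zero_iff_of_nonneg fun _ _ => sq_nonneg _).mp hzero.symm i hi
    have hP0 : P = ⟨0, 0, 0, 0⟩ := P.eq_zero_of_eval_eq_zero s x hx hs hvanish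
    simp only [P, Cubic.mk.injEq, sub_eq_zero] at hP0
    simp only [hP0]
  have hsplit : ∀ i ∈ s, (f i - b0 - b1 * x i - b2 * x i ^ 2 - b3 * x i ^ 3) ^ 2
      = (e i + P.toPoly.eval (x i)) ^ 2 := fun i _ => by rw [hP]; ring
  rw [sum_congr rfl hsplit, sum_add_sq_eq_of_sum_mul_eq_zero s _ _ horth]
  exact lt_add_of_pos_right _ hpos

theorem sum_Icc_neg_add_one_eq {M : Type*} [AddCommMonoid M] (g G : ℤ → M) (h0 : G 0 = 0)
    (hstep : ∀ m, 0 ≤ m → G (m + 1) = G m + (g (-m) + g (m + 1))) {n : ℤ} (hn : 0 ≤ n) :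
    ∑ r ∈ Icc (-n + 1) n, g r = G n := by
  induction n, hn using Int.leInduction with
  | base => simp [h0]
  | succ m hm ih =>
    have hIcc : Icc (-(m + 1) + 1) (m + 1) = insert (-m) (insert (m + 1) (Icc (-m + 1) m)) := by
      ext x; simp only [mem_Icc, mem_insert]; omega
    rw [hIcc, sum_insert (by simp only [mem_insert, mem_Icc]; omega),
      sum_insert (by simp only [mem_Icc]; omega), ih, hstep m hm]
    abel

section PowerSums

variable {n : ℤ} (hn : 0 ≤ n)
include hn

theorem sum_Icc_neg_add_one_pow_of_odd {k : ℕ} (hk : Odd k) :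
    ∑ r ∈ Icc (-n + 1) n, (r : ℝ) ^ k = (n : ℝ) ^ k :=
  sum_Icc_neg_add_one_eq _ (fun m => (m : ℝ) ^ k) (by simp [hk.pos.ne'])
    (fun m _ => by push_cast; rw [hk.neg_pow]; ring) hn

theorem sum_Icc_neg_add_one_pow_zero :
    ∑ r ∈ Icc (-n + 1) n, (r : ℝ) ^ 0 = 2 * n :=
  sum_Icc_neg_add_one_eq _ (fun m => 2 * (m : ℝ)) (by simp) (fun m _ => by push_cast; ring) hn

theorem sum_Icc_neg_add_one_pow_two :
    ∑ r ∈ Icc (-n + 1) n, (r : ℝ) ^ 2 = (n + 2 * n ^ 3) / 3 :=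
  sum_Icc_neg_add_one_eq _ (fun m => ((m : ℝ) + 2 * m ^ 3) / 3) (by simp)
    (fun m _ => by push_cast; ring) hn

theorem sum_Icc_neg_add_one_pow_four :
    ∑ r ∈ Icc (-n + 1) n, (r : ℝ) ^ 4 = (-n + 10 * n ^ 3 + 6 * n ^ 5) / 15 :=
  sum_Icc_neg_add_one_eq _ (fun m => (-(m : ℝ) + 10 * m ^ 3 + 6 * m ^ 5) / 15) (by simp)
    (fun m _ => by push_cast; ring) hn

theorem sum_Icc_neg_add_one_pow_six :
    ∑ r ∈ Icc (-n + 1) n, (r : ℝ) ^ 6 = (n - 7 * n ^ 3 + 21 * n ^ 5 + 6 * n ^ 7) / 21 :=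
  sum_Icc_neg_add_one_eq _ (fun m => ((m : ℝ) - 7 * m ^ 3 + 21 * m ^ 5 + 6 * m ^ 7) / 21)
    (by simp) (fun m _ => by push_cast; ring) hn

end PowerSums

theorem sum_cubic_residual_mul_pow {ι : Type*} (s : Finset ι) (x f : ι → ℝ) (b0 b1 b2 b3 : ℝ)
    (k : ℕ) :
    ∑ i ∈ s, (f i - b0 - b1 * x i - b2 * x i ^ 2 - b3 * x i ^ 3) * x i ^ k
      = ∑ i ∈ s, x i ^ k * f i - b0 * ∑ i ∈ s, x i ^ k - b1 * ∑ i ∈ s, x i ^ (k + 1)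
        - b2 * ∑ i ∈ s, x i ^ (k + 2) - b3 * ∑ i ∈ s, x i ^ (k + 3) := by
  simp only [mul_sum, ← sum_sub_distrib]
  exact sum_congr rfl fun i _ => by ring

theorem cubic_fit_normal_eq (n : ℤ) (hn : 2 ≤ n) (f : ℤ → ℝ)
    (β0 β1 β2 β3 : ℝ)
    (hβ3 : β3 = ∑ r ∈ Finset.Icc (-n + 1) n,
      35 * (10 * (r : ℝ) ^ 3 - 15 * (r : ℝ) ^ 2 + 11 * (r : ℝ) - 6 * (n : ℝ) ^ 2 * (r : ℝ)
          + 3 * (n : ℝ) ^ 2 - 3) /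
        ((n : ℝ) * ((n : ℝ) ^ 2 - 1) * (4 * (n : ℝ) ^ 2 - 1) * (4 * (n : ℝ) ^ 2 - 9)) * f r)
    (hβ2 : β2 = (∑ r ∈ Finset.Icc (-n + 1) n,
      15 * (3 * (r : ℝ) ^ 2 - 3 * (r : ℝ) - (n : ℝ) ^ 2 + 1) /
        (2 * (n : ℝ) * ((n : ℝ) ^ 2 - 1) * (4 * (n : ℝ) ^ 2 - 1)) * f r) - 3 / 2 * β3)
    (hβ1 : β1 = (∑ r ∈ Finset.Icc (-n + 1) n,
      3 * (2 * (r : ℝ) - 1) / ((n : ℝ) * (4 * (n : ℝ) ^ 2 - 1)) * f r)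
      - β2 - 1 / 5 * (3 * (n : ℝ) ^ 2 + 2) * β3)
    (hβ0 : β0 = (1 / (2 * (n : ℝ))) * (∑ r ∈ Finset.Icc (-n + 1) n, f r)
      - 1 / 2 * β1 - 1 / 6 * (2 * (n : ℝ) ^ 2 + 1) * β2 - (n : ℝ) ^ 2 / 2 * β3) :
    ∀ k ≤ 3, ∑ r ∈ Icc (-n + 1) n,
      (f r - β0 - β1 * (r : ℝ) - β2 * (r : ℝ) ^ 2 - β3 * (r : ℝ) ^ 3) * (r : ℝ) ^ k = 0 := by
  have hn2 : (2 : ℝ) ≤ n := by exact_mod_cast hn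
  have hn0 : 0 ≤ n := by omega
  have hN : (n : ℝ) ≠ 0 := by positivity
  have hB : (n : ℝ) ^ 2 - 1 ≠ 0 := by nlinarith
  have hC : 4 * (n : ℝ) ^ 2 - 1 ≠ 0 := by nlinarith
  have hA : 4 * (n : ℝ) ^ 2 - 9 ≠ 0 := by nlinarith
  have hb3 : β3 = (350 * ∑ r ∈ Icc (-n + 1) n, (r : ℝ) ^ 3 * f r
        - 525 * ∑ r ∈ Icc (-n + 1) n, (r : ℝ) ^ 2 * f r
        + (385 - 210 * (n : ℝ) ^ 2) * ∑ r ∈ Icc (-n + 1) n, (r : ℝ) * f r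
        + (105 * (n : ℝ) ^ 2 - 105) * ∑ r ∈ Icc (-n + 1) n, f r) /
      ((n : ℝ) * ((n : ℝ) ^ 2 - 1) * (4 * (n : ℝ) ^ 2 - 1) * (4 * (n : ℝ) ^ 2 - 9)) := by
    rw [hβ3]
    simp only [mul_sum, ← sum_sub_distrib, ← sum_add_distrib, sum_div]
    exact sum_congr rfl fun r _ => by ring
  have hb2 : β2 = (45 * ∑ r ∈ Icc (-n + 1) n, (r : ℝ) ^ 2 * f r
        - 45 * ∑ r ∈ Icc (-n + 1) n, (r : ℝ) * f r
        + (15 - 15 * (n : ℝ) ^ 2) * ∑ r ∈ Icc (-n + 1) n, f r) /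
      (2 * (n : ℝ) * ((n : ℝ) ^ 2 - 1) * (4 * (n : ℝ) ^ 2 - 1)) - 3 / 2 * β3 := by
    rw [hβ2]
    simp only [mul_sum, ← sum_sub_distrib, ← sum_add_distrib, sum_div]
    exact congrArg (· - _) (sum_congr rfl fun r _ => by ring)
  have hb1 : β1 = (6 * ∑ r ∈ Icc (-n + 1) n, (r : ℝ) * f r - 3 * ∑ r ∈ Icc (-n + 1) n, f r) /
      ((n : ℝ) * (4 * (n : ℝ) ^ 2 - 1)) - β2 - 1 / 5 * (3 * (n : ℝ) ^ 2 + 2) * β3 := by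
    rw [hβ1]
    simp only [mul_sum, ← sum_sub_distrib, sum_div]
    exact congrArg (· - _ - _) (sum_congr rfl fun r _ => by ring)
  intro k hk
  have p1 := sum_Icc_neg_add_one_pow_of_odd hn0 (k := 1) (by decide)
  have p3 := sum_Icc_neg_add_one_pow_of_odd hn0 (k := 3) (by decide)
  have p5 := sum_Icc_neg_add_one_pow_of_odd hn0 (k := 5) (by decide)
  rw [sum_cubic_residual_mul_pow, hβ0, hb1, hb2, hb3]
  -- `field_simp` would rewrite these factors into forms whose nonvanishing it no longer sees
  generalize hA' : 4 * (n : ℝ) ^ 2 - 9 = A at hA ⊢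
  generalize hC' : 4 * (n : ℝ) ^ 2 - 1 = C at hC ⊢
  generalize hB' : (n : ℝ) ^ 2 - 1 = B at hB ⊢
  interval_cases k <;>
    simp only [Nat.reduceAdd, p1, p3, p5, sum_Icc_neg_add_one_pow_zero hn0,
      sum_Icc_neg_add_one_pow_two hn0, sum_Icc_neg_add_one_pow_four hn0,
      sum_Icc_neg_add_one_pow_six hn0] <;>
    (try simp only [pow_zero, pow_one, one_mul]) <;>
    field_simp <;> subst hA' hB' hC' <;> ring

/-- Proposition 2.1: ordinary least squares fitting of a cubic polynomial to the
2n observations `(r, f r)`, `r = -n+1, …, n`, attains its unique global minimum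
at the point `(β₀, β₁, β₂, β₃)` given by the stated explicit formulas. -/
theorem stmt_0 (n : ℤ) (hn : 2 ≤ n) (f : ℤ → ℝ)
    (β0 β1 β2 β3 : ℝ)
    (hβ3 : β3 = ∑ r ∈ Finset.Icc (-n + 1) n,
      35 * (10 * (r : ℝ) ^ 3 - 15 * (r : ℝ) ^ 2 + 11 * (r : ℝ) - 6 * (n : ℝ) ^ 2 * (r : ℝ)
          + 3 * (n : ℝ) ^ 2 - 3) /
        ((n : ℝ) * ((n : ℝ) ^ 2 - 1) * (4 * (n : ℝ) ^ 2 - 1) * (4 * (n : ℝ) ^ 2 - 9)) * f r)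
    (hβ2 : β2 = (∑ r ∈ Finset.Icc (-n + 1) n,
      15 * (3 * (r : ℝ) ^ 2 - 3 * (r : ℝ) - (n : ℝ) ^ 2 + 1) /
        (2 * (n : ℝ) * ((n : ℝ) ^ 2 - 1) * (4 * (n : ℝ) ^ 2 - 1)) * f r) - 3 / 2 * β3)
    (hβ1 : β1 = (∑ r ∈ Finset.Icc (-n + 1) n,
      3 * (2 * (r : ℝ) - 1) / ((n : ℝ) * (4 * (n : ℝ) ^ 2 - 1)) * f r)
      - β2 - 1 / 5 * (3 * (n : ℝ) ^ 2 + 2) * β3)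
    (hβ0 : β0 = (1 / (2 * (n : ℝ))) * (∑ r ∈ Finset.Icc (-n + 1) n, f r)
      - 1 / 2 * β1 - 1 / 6 * (2 * (n : ℝ) ^ 2 + 1) * β2 - (n : ℝ) ^ 2 / 2 * β3) :
    ∀ b0 b1 b2 b3 : ℝ, (b0, b1, b2, b3) ≠ (β0, β1, β2, β3) →
      (∑ r ∈ Finset.Icc (-n + 1) n,
        (f r - β0 - β1 * (r : ℝ) - β2 * (r : ℝ) ^ 2 - β3 * (r : ℝ) ^ 3) ^ 2) <
      (∑ r ∈ Finset.Icc (-n + 1) n,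
        (f r - b0 - b1 * (r : ℝ) - b2 * (r : ℝ) ^ 2 - b3 * (r : ℝ) ^ 3) ^ 2) := by
  intro b0 b1 b2 b3 hne
  have hcard : 4 ≤ #(Icc (-n + 1) n) := by rw [Int.card_Icc]; omega
  exact sum_sq_cubic_residual_lt _ (fun r : ℤ => (r : ℝ)) f Int.cast_injective.injOn hcard
    (cubic_fit_normal_eq n hn f β0 β1 β2 β3 hβ3 hβ2 hβ1 hβ0) hne
end

section
/- For every integer n ≥ 2 and every real data vector (f_r)_{r=-n}^{n}, the function R(β₀,β₁,β₂,β₃) = ∑_{r=-n}^{n} (f_r − β₀ − β₁r − β₂r² − β₃r³)² attains its unique global minimum over ℝ⁴ at the point defined by β₃ = ∑_{r=-n}^{n} [35(5r³ − 3n²r − 3nr + r)/(n(n²−1)(n+2)(4n²−1)(2n+3))] f_r, β₂ = ∑_{r=-n}^{n} [15(3r² − n² − n)/(n(n+1)(4n²−1)(2n+3))] f_r, β₁ = ∑_{r=-n}^{n} [3r/(n(n+1)(2n+1))] f_r − (1/5)(3n²+3n−1)β₃, and β₀ = (1/(2n+1)) ∑_{r=-n}^{n} f_r − (1/3)n(n+1)β₂.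 (Proposition 2.3) -/
/-!
Over the symmetric nodes `-n, …, n` the odd power sums vanish, so the normal equations of the
cubic least-squares problem split into a `2 × 2` system for `(β₀, β₂)` and one for `(β₁, β₃)`;
the stated formulas are their solutions by elimination, once `∑ r ^ 2`, `∑ r ^ 4`, `∑ r ^ 6` are
known in closed form. The residual of the fit is then orthogonal to every cubic, so by Pythagoras
`R(b) = R(β) + ∑ (p_β(r) - p_b(r)) ^ 2`, and the last sum is positive for `b ≠ β` because a
nonzero cubic cannot vanish at the four nodes `-1, 0, 1, 2` (a Vandermonde determinant).
-/

open Finset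

section PowerSums

noncomputable def powerSum (n : ℤ) (k : ℕ) : ℝ := ∑ r ∈ Icc (-n) n, (r : ℝ) ^ k

lemma sum_Icc_neg_add_one {M : Type*} [AddCommMonoid M] (g : ℤ → M) {m : ℤ} (hm : 0 ≤ m) :
    ∑ r ∈ Icc (-(m + 1)) (m + 1), g r = ∑ r ∈ Icc (-m) m, g r + (g (m + 1) + g (-(m + 1))) := by
  have hIcc : Icc (-(m + 1)) (m + 1) = insert (m + 1) (insert (-(m + 1)) (Icc (-m) m)) := by
    ext x; simp only [mem_Icc, mem_insert]; omega
  rw [hIcc, sum_insert (by simp only [mem_Icc, mem_insert]; omega),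
    sum_insert (by simp only [mem_Icc]; omega)]
  abel

variable {n : ℤ}

lemma powerSum_eq_of_add_one {k : ℕ} (F : ℝ → ℝ) (h0 : F 0 = 0 ^ k)
    (hF : ∀ x, F (x + 1) = F x + ((x + 1) ^ k + (-(x + 1)) ^ k)) (hn : 0 ≤ n) :
    powerSum n k = F n := by
  induction n, hn using Int.leInduction with
  | base => simp [powerSum, h0]
  | succ m hm ih =>
    rw [powerSum, sum_Icc_neg_add_one _ hm, ← powerSum, ih]
    push_cast
    exact (hF m).symm

lemma powerSum_of_odd {k : ℕ} (hk : Odd k) (hn : 0 ≤ n) : powerSum n k = 0 :=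
  powerSum_eq_of_add_one (fun _ ↦ 0) (by simp [hk.pos.ne']) (fun x ↦ by rw [hk.neg_pow]; ring) hn

lemma powerSum_zero (hn : 0 ≤ n) : powerSum n 0 = 2 * n + 1 :=
  powerSum_eq_of_add_one (fun x ↦ 2 * x + 1) (by simp) (fun x ↦ by ring) hn

lemma powerSum_two (hn : 0 ≤ n) : powerSum n 2 = n * (n + 1) * (2 * n + 1) / 3 :=
  powerSum_eq_of_add_one (fun x ↦ x * (x + 1) * (2 * x + 1) / 3) (by simp) (fun x ↦ by ring) hn

lemma powerSum_four (hn : 0 ≤ n) :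
    powerSum n 4 = n * (n + 1) * (2 * n + 1) * (3 * n ^ 2 + 3 * n - 1) / 15 :=
  powerSum_eq_of_add_one (fun x ↦ x * (x + 1) * (2 * x + 1) * (3 * x ^ 2 + 3 * x - 1) / 15)
    (by simp) (fun x ↦ by ring) hn

lemma powerSum_six (hn : 0 ≤ n) :
    powerSum n 6 = n * (n + 1) * (2 * n + 1) * (3 * n ^ 4 + 6 * n ^ 3 - 3 * n + 1) / 21 :=
  powerSum_eq_of_add_one
    (fun x ↦ x * (x + 1) * (2 * x + 1) * (3 * x ^ 4 + 6 * x ^ 3 - 3 * x + 1) / 21)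
    (by simp) (fun x ↦ by ring) hn

end PowerSums

section LeastSquares

variable {ι : Type*} (S : Finset ι) (x y : ι → ℝ) {d : ℕ}

lemma sum_residual_mul_pow (β : Fin d → ℝ) (k : ℕ) :
    ∑ i ∈ S, (y i - ∑ j, β j * x i ^ (j : ℕ)) * x i ^ k =
      ∑ i ∈ S, y i * x i ^ k - ∑ j, β j * ∑ i ∈ S, x i ^ ((j : ℕ) + k) := by
  simp only [sub_mul, sum_sub_distrib, sum_mul, mul_sum, pow_add, mul_assoc]
  rw [sum_comm]

lemma sum_sq_sub_eq_add_of_normal_eqs (β c : Fin d → ℝ)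
    (hβ : ∀ k : Fin d, ∑ i ∈ S, (y i - ∑ j, β j * x i ^ (j : ℕ)) * x i ^ (k : ℕ) = 0) :
    ∑ i ∈ S, (y i - ∑ j, c j * x i ^ (j : ℕ)) ^ 2 =
      ∑ i ∈ S, (y i - ∑ j, β j * x i ^ (j : ℕ)) ^ 2 +
        ∑ i ∈ S, (∑ j, (β j - c j) * x i ^ (j : ℕ)) ^ 2 := by
  have horth :
      ∑ i ∈ S, (y i - ∑ j, β j * x i ^ (j : ℕ)) * ∑ j, (β j - c j) * x i ^ (j : ℕ) = 0 := by
    simp_rw [mul_sum, mul_left_comm _ (β _ - c _)]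
    rw [sum_comm]
    simp [← mul_sum, hβ]
  have hsplit : ∀ i, y i - ∑ j, c j * x i ^ (j : ℕ) =
      (y i - ∑ j, β j * x i ^ (j : ℕ)) + ∑ j, (β j - c j) * x i ^ (j : ℕ) := by
    intro i
    simp only [sub_mul, sum_sub_distrib]
    ring
  simp_rw [hsplit, add_sq, sum_add_distrib, mul_assoc, ← mul_sum, horth]
  ring

lemma eq_zero_of_sum_sq_eq_zero (c : Fin d → ℝ) (v : Fin d → ι) (hvS : ∀ k, v k ∈ S)
    (hv : Function.Injective (x ∘ v)) (h : ∑ i ∈ S, (∑ j, c j * x i ^ (j : ℕ)) ^ 2 = 0) :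
    c = 0 := by
  have hzero : ∀ i ∈ S, ∑ j, c j * x i ^ (j : ℕ) = 0 := fun i hi ↦
    pow_eq_zero_iff two_ne_zero |>.mp ((sum_eq_zero_iff_of_nonneg fun _ _ ↦ sq_nonneg _).mp h i hi)
  refine Matrix.eq_zero_of_mulVec_eq_zero (Matrix.det_vandermonde_ne_zero_iff.mpr hv) ?_
  ext k
  simpa [Matrix.mulVec, dotProduct, Matrix.vandermonde_apply, mul_comm] using hzero _ (hvS k)

theorem sum_sq_sub_lt_of_normal_eqs (β c : Fin d → ℝ)
    (hβ : ∀ k : Fin d, ∑ i ∈ S, (y i - ∑ j, β j * x i ^ (j : ℕ)) * x i ^ (k : ℕ) = 0)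
    (v : Fin d → ι) (hvS : ∀ k, v k ∈ S) (hv : Function.Injective (x ∘ v)) (hc : c ≠ β) :
    ∑ i ∈ S, (y i - ∑ j, β j * x i ^ (j : ℕ)) ^ 2 <
      ∑ i ∈ S, (y i - ∑ j, c j * x i ^ (j : ℕ)) ^ 2 := by
  rw [sum_sq_sub_eq_add_of_normal_eqs S x y β c hβ, lt_add_iff_pos_right]
  refine (sum_nonneg fun _ _ ↦ sq_nonneg _).lt_of_ne fun h ↦ hc ?_
  have := eq_zero_of_sum_sq_eq_zero S x (β - c) v hvS hv (by simpa using h.symm)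
  exact (sub_eq_zero.mp this).symm

end LeastSquares

lemma sum_mul_sub_sum_mul_div {ι : Type*} (S : Finset ι) (g p q : ι → ℝ) (a b c : ℝ) :
    (a * ∑ i ∈ S, g i * p i - b * ∑ i ∈ S, g i * q i) / c =
      ∑ i ∈ S, (a * p i - b * q i) / c * g i := by
  simp only [mul_sum, ← sum_sub_distrib, sum_div]
  exact sum_congr rfl fun _ _ ↦ by ring

lemma solve_two_by_two {a b c u v x y : ℝ} (ha : a ≠ 0) (hΔ : a * c - b ^ 2 ≠ 0)
    (hx : x = u / a - b / a * y) (hy : y = (a * v - b * u) / (a * c - b ^ 2)) :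
    a * x + b * y = u ∧ b * x + c * y = v := by
  subst hx hy
  constructor <;> field_simp <;> ring

lemma sub_cubic_eq_sub_sum (y c₀ c₁ c₂ c₃ x : ℝ) :
    y - c₀ - c₁ * x - c₂ * x ^ 2 - c₃ * x ^ 3 = y - ∑ j, ![c₀, c₁, c₂, c₃] j * x ^ (j : ℕ) := by
  simp only [Fin.sum_univ_four, Fin.isValue, Matrix.cons_val, Fin.coe_ofNat_eq_mod]
  ring

section CubicFit

noncomputable def moment (n : ℤ) (f : ℤ → ℝ) (k : ℕ) : ℝ :=
  ∑ r ∈ Icc (-n) n, f r * (r : ℝ) ^ k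

variable {n : ℤ} (f : ℤ → ℝ)

lemma normal_eqs_of_decoupled (hn : 0 ≤ n) {β₀ β₁ β₂ β₃ : ℝ}
    (h₀ : powerSum n 0 * β₀ + powerSum n 2 * β₂ = moment n f 0)
    (h₁ : powerSum n 2 * β₁ + powerSum n 4 * β₃ = moment n f 1)
    (h₂ : powerSum n 2 * β₀ + powerSum n 4 * β₂ = moment n f 2)
    (h₃ : powerSum n 4 * β₁ + powerSum n 6 * β₃ = moment n f 3) (k : Fin 4) :
    ∑ r ∈ Icc (-n) n, (f r - ∑ j, ![β₀, β₁, β₂, β₃] j * (r : ℝ) ^ (j : ℕ)) * (r : ℝ) ^ (k : ℕ)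
      = 0 := by
  have hσ₁ : powerSum n 1 = 0 := powerSum_of_odd (by decide) hn
  have hσ₃ : powerSum n 3 = 0 := powerSum_of_odd (by decide) hn
  have hσ₅ : powerSum n 5 = 0 := powerSum_of_odd (by decide) hn
  rw [sum_residual_mul_pow, ← moment]
  simp only [← powerSum.eq_1, Fin.sum_univ_four]
  fin_cases k <;>
    simp only [Fin.isValue, Fin.coe_ofNat_eq_mod, Matrix.cons_val,
      hσ₁, hσ₃, hσ₅, mul_zero, add_zero] <;>
    linarith

lemma odd_normal_eqs_of_formulas (hn : 2 ≤ n) {β₁ β₃ : ℝ}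
    (hβ₃ : β₃ = ∑ r ∈ Icc (-n) n,
      35 * (5 * (r : ℝ) ^ 3 - 3 * (n : ℝ) ^ 2 * (r : ℝ) - 3 * (n : ℝ) * (r : ℝ) + (r : ℝ)) /
        ((n : ℝ) * ((n : ℝ) ^ 2 - 1) * ((n : ℝ) + 2) * (4 * (n : ℝ) ^ 2 - 1)
          * (2 * (n : ℝ) + 3)) * f r)
    (hβ₁ : β₁ = (∑ r ∈ Icc (-n) n,
      3 * (r : ℝ) / ((n : ℝ) * ((n : ℝ) + 1) * (2 * (n : ℝ) + 1)) * f r)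
      - 1 / 5 * (3 * (n : ℝ) ^ 2 + 3 * (n : ℝ) - 1) * β₃) :
    powerSum n 2 * β₁ + powerSum n 4 * β₃ = moment n f 1 ∧
      powerSum n 4 * β₁ + powerSum n 6 * β₃ = moment n f 3 := by
  have hn0 : 0 ≤ n := by omega
  have hn_two : (2 : ℝ) ≤ n := by exact_mod_cast hn
  have hn_pos : (0 : ℝ) < n := by linarith
  have hn_sub_one : (0 : ℝ) < n - 1 := by linarith
  have h2n_sub_one : (0 : ℝ) < 2 * n - 1 := by linarith
  have hΔ : powerSum n 2 * powerSum n 6 - powerSum n 4 ^ 2 = n ^ 2 * (n + 1) ^ 2 * (2 * n + 1) ^ 2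
      * (n - 1) * (n + 2) * (2 * n - 1) * (2 * n + 3) / 525 := by
    rw [powerSum_two hn0, powerSum_four hn0, powerSum_six hn0]
    ring
  refine solve_two_by_two (by rw [powerSum_two hn0]; positivity) (by rw [hΔ]; positivity)
    ?_ ?_
  · rw [hβ₁, moment, sum_div, powerSum_two hn0, powerSum_four hn0]
    congr 1
    · exact sum_congr rfl fun r _ ↦ by field_simp
    · field_simp
      ring
  · rw [hβ₃, moment, moment, sum_mul_sub_sum_mul_div, hΔ, powerSum_two hn0, powerSum_four hn0,
      show (n : ℝ) ^ 2 - 1 = (n - 1) * (n + 1) by ring,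
      show 4 * (n : ℝ) ^ 2 - 1 = (2 * n - 1) * (2 * n + 1) by ring]
    exact sum_congr rfl fun r _ ↦ by field_simp; ring

lemma even_normal_eqs_of_formulas (hn : 1 ≤ n) {β₀ β₂ : ℝ}
    (hβ₂ : β₂ = ∑ r ∈ Icc (-n) n,
      15 * (3 * (r : ℝ) ^ 2 - (n : ℝ) ^ 2 - (n : ℝ)) /
        ((n : ℝ) * ((n : ℝ) + 1) * (4 * (n : ℝ) ^ 2 - 1) * (2 * (n : ℝ) + 3)) * f r)
    (hβ₀ : β₀ = (1 / (2 * (n : ℝ) + 1)) * (∑ r ∈ Icc (-n) n, f r)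
      - 1 / 3 * (n : ℝ) * ((n : ℝ) + 1) * β₂) :
    powerSum n 0 * β₀ + powerSum n 2 * β₂ = moment n f 0 ∧
      powerSum n 2 * β₀ + powerSum n 4 * β₂ = moment n f 2 := by
  have hn0 : 0 ≤ n := by omega
  have hn_one : (1 : ℝ) ≤ n := by exact_mod_cast hn
  have hn_pos : (0 : ℝ) < n := by linarith
  have h2n_sub_one : (0 : ℝ) < 2 * n - 1 := by linarith
  have hΔ : powerSum n 0 * powerSum n 4 - powerSum n 2 ^ 2 =
      (2 * n + 1) ^ 2 * n * (n + 1) * (2 * n - 1) * (2 * n + 3) / 45 := by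
    rw [powerSum_zero hn0, powerSum_two hn0, powerSum_four hn0]
    ring
  have hM₀ : moment n f 0 = ∑ r ∈ Icc (-n) n, f r := by simp [moment]
  refine solve_two_by_two (by rw [powerSum_zero hn0]; positivity) (by rw [hΔ]; positivity)
    ?_ ?_
  · rw [hβ₀, hM₀, powerSum_zero hn0, powerSum_two hn0]
    field_simp
  · rw [hβ₂, moment, moment, sum_mul_sub_sum_mul_div, hΔ, powerSum_zero hn0, powerSum_two hn0,
      show 4 * (n : ℝ) ^ 2 - 1 = (2 * n - 1) * (2 * n + 1) by ring]
    exact sum_congr rfl fun r _ ↦ by field_simp; ring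

end CubicFit

/-- Proposition 2.3: ordinary least squares fitting of a cubic polynomial to the
2n+1 observations `(r, f r)`, `r = -n, …, n`, attains its unique global minimum
at the point `(β₀, β₁, β₂, β₃)` given by the stated explicit formulas. -/
theorem stmt_2 (n : ℤ) (hn : 2 ≤ n) (f : ℤ → ℝ)
    (β0 β1 β2 β3 : ℝ)
    (hβ3 : β3 = ∑ r ∈ Finset.Icc (-n) n,
      35 * (5 * (r : ℝ) ^ 3 - 3 * (n : ℝ) ^ 2 * (r : ℝ) - 3 * (n : ℝ) * (r : ℝ) + (r : ℝ)) /
        ((n : ℝ) * ((n : ℝ) ^ 2 - 1) * ((n : ℝ) + 2) * (4 * (n : ℝ) ^ 2 - 1)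
          * (2 * (n : ℝ) + 3)) * f r)
    (hβ2 : β2 = ∑ r ∈ Finset.Icc (-n) n,
      15 * (3 * (r : ℝ) ^ 2 - (n : ℝ) ^ 2 - (n : ℝ)) /
        ((n : ℝ) * ((n : ℝ) + 1) * (4 * (n : ℝ) ^ 2 - 1) * (2 * (n : ℝ) + 3)) * f r)
    (hβ1 : β1 = (∑ r ∈ Finset.Icc (-n) n,
      3 * (r : ℝ) / ((n : ℝ) * ((n : ℝ) + 1) * (2 * (n : ℝ) + 1)) * f r)
      - 1 / 5 * (3 * (n : ℝ) ^ 2 + 3 * (n : ℝ) - 1) * β3)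
    (hβ0 : β0 = (1 / (2 * (n : ℝ) + 1)) * (∑ r ∈ Finset.Icc (-n) n, f r)
      - 1 / 3 * (n : ℝ) * ((n : ℝ) + 1) * β2) :
    ∀ b0 b1 b2 b3 : ℝ, (b0, b1, b2, b3) ≠ (β0, β1, β2, β3) →
      (∑ r ∈ Finset.Icc (-n) n,
        (f r - β0 - β1 * (r : ℝ) - β2 * (r : ℝ) ^ 2 - β3 * (r : ℝ) ^ 3) ^ 2) <
      (∑ r ∈ Finset.Icc (-n) n,
        (f r - b0 - b1 * (r : ℝ) - b2 * (r : ℝ) ^ 2 - b3 * (r : ℝ) ^ 3) ^ 2) := by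
  intro b0 b1 b2 b3 hne
  obtain ⟨h₀, h₂⟩ := even_normal_eqs_of_formulas f (by omega) hβ2 hβ0
  obtain ⟨h₁, h₃⟩ := odd_normal_eqs_of_formulas f hn hβ3 hβ1
  simp only [sub_cubic_eq_sub_sum]
  refine sum_sq_sub_lt_of_normal_eqs _ _ _ _ _
    (normal_eqs_of_decoupled f (by omega) h₀ h₁ h₂ h₃) ![-1, 0, 1, 2] (fun k ↦ ?_)
    (Int.cast_injective.comp (by decide)) (by simpa [Matrix.vecCons_inj] using hne)
  fin_cases k <;> simp only [Fin.reduceFinMk, Matrix.cons_val, mem_Icc] <;> omega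
end

section
/- Let n ≥ 2 be an integer, (f_r)_{r=-n+1}^{n} real data and w_r > 0 for each r ∈ {−n+1,…,n}. Then χ₀ > 0, and the unique global minimizer (β₀,β₁) ∈ ℝ² of ∑_{r=-n+1}^{n} w_r (f_r − β₀ − β₁r)² satisfies β₀ + (1/4)β₁ = (1/(4χ₀)) ∑_{r=-n+1}^{n} (4α₂ − 4rα₁ + rα₀ − α₁) w_r f_r and β₀ + (3/4)β₁ = (1/(4χ₀)) ∑_{r=-n+1}^{n} (4α₂ − 4rα₁ + 3rα₀ − 3α₁) w_r f_r; these are the two refinement rules (2.37) of the family of 2n-point schemes D_{2n,1}. -/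
/-- The refinement rules (2.37) of the family of 2n-point schemes `D_{2n,1}`:
weighted least squares fitting of a line to `(r, f r)`, `r = -n+1,…,n`, with
positive weights. Then `χ₀ > 0` and the unique minimizer `(β₀, β₁)` satisfies
the two stated evaluation formulas at `1/4` and `3/4`. -/
theorem stmt_8 (n : ℤ) (hn : 2 ≤ n) (f w : ℤ → ℝ)
    (hw : ∀ r ∈ Finset.Icc (-n + 1) n, 0 < w r)
    (α0 α1 α2 χ0 : ℝ)
    (hα0 : α0 = ∑ r ∈ Finset.Icc (-n + 1) n, w r)
    (hα1 : α1 = ∑ r ∈ Finset.Icc (-n + 1) n, (r : ℝ) * w r)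
    (hα2 : α2 = ∑ r ∈ Finset.Icc (-n + 1) n, (r : ℝ) ^ 2 * w r)
    (hχ0 : χ0 = α0 * α2 - α1 ^ 2)
    (E : ℝ × ℝ → ℝ)
    (hE : ∀ p : ℝ × ℝ, E p = ∑ r ∈ Finset.Icc (-n + 1) n,
      w r * (f r - p.1 - p.2 * (r : ℝ)) ^ 2) :
    0 < χ0 ∧ (∃! p : ℝ × ℝ, ∀ q : ℝ × ℝ, E p ≤ E q) ∧
    ∀ p : ℝ × ℝ, (∀ q : ℝ × ℝ, E p ≤ E q) →
      p.1 + 1 / 4 * p.2 = (1 / (4 * χ0)) * ∑ r ∈ Finset.Icc (-n + 1) n,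
        (4 * α2 - 4 * (r : ℝ) * α1 + (r : ℝ) * α0 - α1) * w r * f r ∧
      p.1 + 3 / 4 * p.2 = (1 / (4 * χ0)) * ∑ r ∈ Finset.Icc (-n + 1) n,
        (4 * α2 - 4 * (r : ℝ) * α1 + 3 * (r : ℝ) * α0 - 3 * α1) * w r * f r := by
  set S := Finset.Icc (-n + 1) n with hS
  have h0 : (0 : ℤ) ∈ S := by simp [hS, Finset.mem_Icc]; omega
  have h1 : (1 : ℤ) ∈ S := by simp [hS, Finset.mem_Icc]; omega
  have hα0pos : 0 < α0 := by
    rw [hα0]; exact Finset.sum_pos hw ⟨0, h0⟩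
  have hα0ne : α0 ≠ 0 := ne_of_gt hα0pos
  set m := α1 / α0 with hm
  have hvar : ∑ r ∈ S, w r * ((r : ℝ) - m) ^ 2 = α2 - 2 * m * α1 + m ^ 2 * α0 := by
    simp only [hα0, hα1, hα2, Finset.mul_sum, ← Finset.sum_sub_distrib,
      ← Finset.sum_add_distrib]
    exact Finset.sum_congr rfl (fun r _ => by ring)
  have hχvar : χ0 = α0 * ∑ r ∈ S, w r * ((r : ℝ) - m) ^ 2 := by
    rw [hvar, hχ0, hm]; field_simp; ring
  have hχpos : 0 < χ0 := by
    rw [hχvar]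
    apply mul_pos hα0pos
    apply Finset.sum_pos'
    · exact fun r hr => mul_nonneg (le_of_lt (hw r hr)) (sq_nonneg _)
    · by_cases hm0 : m = 0
      · exact ⟨1, h1, mul_pos (hw 1 h1) (by rw [hm0]; norm_num)⟩
      · refine ⟨0, h0, mul_pos (hw 0 h0) ?_⟩
        have hne : ((0 : ℤ) : ℝ) - m ≠ 0 := by simpa using neg_ne_zero.mpr hm0
        positivity
  have hχne : χ0 ≠ 0 := ne_of_gt hχpos
  set γ0 := ∑ r ∈ S, w r * f r with hγ0
  set γ1 := ∑ r ∈ S, (r : ℝ) * (w r * f r) with hγ1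
  set β0 := (α2 * γ0 - α1 * γ1) / χ0 with hβ0
  set β1 := (α0 * γ1 - α1 * γ0) / χ0 with hβ1
  -- normal equations
  have hN0 : ∑ r ∈ S, w r * (f r - β0 - β1 * (r : ℝ)) = 0 := by
    have : ∑ r ∈ S, w r * (f r - β0 - β1 * (r : ℝ))
        = γ0 - β0 * α0 - β1 * α1 := by
      simp only [hγ0, hα0, hα1, Finset.mul_sum, ← Finset.sum_sub_distrib]
      exact Finset.sum_congr rfl (fun r _ => by ring)
    rw [this, hβ0, hβ1]
    field_simp
    rw [hχ0]
    ring
  have hN1 : ∑ r ∈ S, (r : ℝ) * (w r * (f r - β0 - β1 * (r : ℝ))) = 0 := by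
    have : ∑ r ∈ S, (r : ℝ) * (w r * (f r - β0 - β1 * (r : ℝ)))
        = γ1 - β0 * α1 - β1 * α2 := by
      simp only [hγ1, hα1, hα2, Finset.mul_sum, ← Finset.sum_sub_distrib]
      exact Finset.sum_congr rfl (fun r _ => by ring)
    rw [this, hβ0, hβ1]
    field_simp
    rw [hχ0]
    ring
  set p : ℝ × ℝ := (β0, β1) with hp
  have hkey : ∀ q : ℝ × ℝ, E q = E p + ∑ r ∈ S,
      w r * ((β0 - q.1) + (β1 - q.2) * (r : ℝ)) ^ 2 := by
    intro q
    have hpt : ∀ r ∈ S, w r * (f r - q.1 - q.2 * (r : ℝ)) ^ 2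
        = w r * (f r - β0 - β1 * (r : ℝ)) ^ 2
          + w r * ((β0 - q.1) + (β1 - q.2) * (r : ℝ)) ^ 2
          + (2 * (β0 - q.1) * (w r * (f r - β0 - β1 * (r : ℝ)))
            + 2 * (β1 - q.2) * ((r : ℝ) * (w r * (f r - β0 - β1 * (r : ℝ))))) := by
      intro r _; ring
    rw [hE q, hE p, Finset.sum_congr rfl hpt]
    rw [Finset.sum_add_distrib, Finset.sum_add_distrib, Finset.sum_add_distrib,
      ← Finset.mul_sum, ← Finset.mul_sum, hN0, hN1]
    ring
  have hmin : ∀ q : ℝ × ℝ, E p ≤ E q := by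
    intro q
    rw [hkey q]
    have : 0 ≤ ∑ r ∈ S, w r * ((β0 - q.1) + (β1 - q.2) * (r : ℝ)) ^ 2 :=
      Finset.sum_nonneg (fun r hr => mul_nonneg (le_of_lt (hw r hr)) (sq_nonneg _))
    linarith
  have huniq : ∀ q : ℝ × ℝ, (∀ q' : ℝ × ℝ, E q ≤ E q') → q = p := by
    intro q hq
    have hle : E q ≤ E p := hq p
    have heq : ∑ r ∈ S, w r * ((β0 - q.1) + (β1 - q.2) * (r : ℝ)) ^ 2 = 0 := by
      have := hkey q
      linarith [hmin q]
    have hz : ∀ r ∈ S, w r * ((β0 - q.1) + (β1 - q.2) * (r : ℝ)) ^ 2 = 0 :=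
      (Finset.sum_eq_zero_iff_of_nonneg
        (fun r hr => mul_nonneg (le_of_lt (hw r hr)) (sq_nonneg _))).mp heq
    have hz0 : (β0 - q.1) + (β1 - q.2) * ((0 : ℤ) : ℝ) = 0 := by
      have := hz 0 h0
      have hwne := ne_of_gt (hw 0 h0)
      have := (mul_eq_zero.mp this).resolve_left hwne
      exact pow_eq_zero_iff (by norm_num) |>.mp this
    have hz1 : (β0 - q.1) + (β1 - q.2) * ((1 : ℤ) : ℝ) = 0 := by
      have := hz 1 h1
      have hwne := ne_of_gt (hw 1 h1)
      have := (mul_eq_zero.mp this).resolve_left hwne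
      exact pow_eq_zero_iff (by norm_num) |>.mp this
    simp only [Int.cast_zero, mul_zero, add_zero, Int.cast_one, mul_one] at hz0 hz1
    have hq1 : q.1 = β0 := by linarith
    have hq2 : q.2 = β1 := by linarith
    exact Prod.ext hq1 hq2
  refine ⟨hχpos, ⟨p, hmin, huniq⟩, ?_⟩
  intro p' hp'
  have hpe : p' = p := huniq p' hp'
  subst hpe
  have hsum1 : ∑ r ∈ S, (4 * α2 - 4 * (r : ℝ) * α1 + (r : ℝ) * α0 - α1) * w r * f r
      = 4 * α2 * γ0 - 4 * α1 * γ1 + α0 * γ1 - α1 * γ0 := by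
    simp only [hγ0, hγ1, Finset.mul_sum, ← Finset.sum_sub_distrib,
      ← Finset.sum_add_distrib]
    exact Finset.sum_congr rfl (fun r _ => by ring)
  have hsum3 : ∑ r ∈ S, (4 * α2 - 4 * (r : ℝ) * α1 + 3 * (r : ℝ) * α0 - 3 * α1) * w r * f r
      = 4 * α2 * γ0 - 4 * α1 * γ1 + 3 * (α0 * γ1) - 3 * (α1 * γ0) := by
    simp only [hγ0, hγ1, Finset.mul_sum, ← Finset.sum_sub_distrib,
      ← Finset.sum_add_distrib]
    exact Finset.sum_congr rfl (fun r _ => by ring)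
  constructor
  · rw [hsum1]
    show β0 + 1 / 4 * β1 = _
    rw [hβ0, hβ1]
    field_simp
    ring
  · rw [hsum3]
    show β0 + 3 / 4 * β1 = _
    rw [hβ0, hβ1]
    field_simp
    ring
end

section
/- Let n ≥ 2 be an integer, (f_r)_{r=-n}^{n} real data and w_r > 0 for each r ∈ {−n,…,n}. Then χ₀ > 0, and the unique global minimizer (β₀,β₁) ∈ ℝ² of ∑_{r=-n}^{n} w_r (f_r − β₀ − β₁r)² satisfies β₀ − (1/4)β₁ = (1/(4χ₀)) ∑_{r=-n}^{n} (4α₂ − 4rα₁ − rα₀ + α₁) w_r f_r and β₀ + (1/4)β₁ = (1/(4χ₀)) ∑_{r=-n}^{n} (4α₂ − 4rα₁ + rα₀ − α₁) w_r f_r; these are the two refinement rules (2.39) of the family of (2n+1)-point schemes D_{2n+1,1}. -/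
/-- The refinement rules (2.39) of the family of (2n+1)-point schemes `D_{2n+1,1}`:
weighted least squares fitting of a line to `(r, f r)`, `r = -n,…,n`, with
positive weights. Then `χ₀ > 0` and the unique minimizer `(β₀, β₁)` satisfies
the two stated evaluation formulas at `-1/4` and `1/4`. -/
theorem stmt_9 (n : ℤ) (hn : 2 ≤ n) (f w : ℤ → ℝ)
    (hw : ∀ r ∈ Finset.Icc (-n) n, 0 < w r)
    (α0 α1 α2 χ0 : ℝ)
    (hα0 : α0 = ∑ r ∈ Finset.Icc (-n) n, w r)
    (hα1 : α1 = ∑ r ∈ Finset.Icc (-n) n, (r : ℝ) * w r)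
    (hα2 : α2 = ∑ r ∈ Finset.Icc (-n) n, (r : ℝ) ^ 2 * w r)
    (hχ0 : χ0 = α0 * α2 - α1 ^ 2)
    (E : ℝ × ℝ → ℝ)
    (hE : ∀ p : ℝ × ℝ, E p = ∑ r ∈ Finset.Icc (-n) n,
      w r * (f r - p.1 - p.2 * (r : ℝ)) ^ 2) :
    0 < χ0 ∧ (∃! p : ℝ × ℝ, ∀ q : ℝ × ℝ, E p ≤ E q) ∧
    ∀ p : ℝ × ℝ, (∀ q : ℝ × ℝ, E p ≤ E q) →
      p.1 - 1 / 4 * p.2 = (1 / (4 * χ0)) * ∑ r ∈ Finset.Icc (-n) n,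
        (4 * α2 - 4 * (r : ℝ) * α1 - (r : ℝ) * α0 + α1) * w r * f r ∧
      p.1 + 1 / 4 * p.2 = (1 / (4 * χ0)) * ∑ r ∈ Finset.Icc (-n) n,
        (4 * α2 - 4 * (r : ℝ) * α1 + (r : ℝ) * α0 - α1) * w r * f r := by
  set S := Finset.Icc (-n) n with hS
  have h0S : (0 : ℤ) ∈ S := by rw [hS, Finset.mem_Icc]; omega
  have h1S : (1 : ℤ) ∈ S := by rw [hS, Finset.mem_Icc]; omega
  have hα0pos : 0 < α0 := by
    rw [hα0]; exact Finset.sum_pos hw ⟨0, h0S⟩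
  -- χ0 > 0
  set t : ℝ := α1 / α0 with ht
  have hQsum : α2 - 2*t*α1 + t^2*α0 = ∑ r ∈ S, w r * ((r:ℝ) - t)^2 := by
    rw [hα0, hα1, hα2]
    simp only [Finset.mul_sum, ← Finset.sum_sub_distrib, ← Finset.sum_add_distrib]
    exact Finset.sum_congr rfl fun r _ => by ring
  have hQge : w 0 * ((0:ℝ) - t)^2 + w 1 * ((1:ℝ) - t)^2 ≤ ∑ r ∈ S, w r * ((r:ℝ) - t)^2 := by
    have hsub : ({0, 1} : Finset ℤ) ⊆ S := by
      intro x hx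
      simp only [Finset.mem_insert, Finset.mem_singleton] at hx
      rcases hx with h | h <;> subst h <;> assumption
    have := Finset.sum_le_sum_of_subset_of_nonneg (f := fun r : ℤ => w r * ((r:ℝ) - t)^2)
      hsub (fun r hr _ => mul_nonneg (hw r hr).le (sq_nonneg _))
    rw [Finset.sum_insert (by simp), Finset.sum_singleton] at this
    simpa using this
  have hQpos : 0 < α2 - 2*t*α1 + t^2*α0 := by
    rw [hQsum]
    have hw0 := hw 0 h0S
    have hw1 := hw 1 h1S
    refine lt_of_lt_of_le ?_ hQge
    nlinarith [mul_pos hw0 hw1, sq_nonneg (2*t - 1),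
      mul_nonneg hw0.le (sq_nonneg t), mul_nonneg hw1.le (sq_nonneg (1 - t)),
      sq_nonneg t, sq_nonneg (1 - t)]
  have hχpos : 0 < χ0 := by
    have : χ0 = α0 * (α2 - 2*t*α1 + t^2*α0) := by
      rw [hχ0, ht]; field_simp; ring
    rw [this]; exact mul_pos hα0pos hQpos
  have hχne : χ0 ≠ 0 := ne_of_gt hχpos
  have hα0ne : α0 ≠ 0 := ne_of_gt hα0pos
  -- the minimizer
  set γ : ℝ := ∑ r ∈ S, w r * f r with hγ
  set δ : ℝ := ∑ r ∈ S, (r:ℝ) * w r * f r with hδ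
  set p1 : ℝ := (α2 * γ - α1 * δ) / χ0 with hp1
  set p2 : ℝ := (α0 * δ - α1 * γ) / χ0 with hp2
  have hne1 : γ - p1 * α0 - p2 * α1 = 0 := by
    rw [hp1, hp2]
    field_simp
    linear_combination γ * hχ0
  have hne2 : δ - p1 * α1 - p2 * α2 = 0 := by
    rw [hp1, hp2]
    field_simp
    linear_combination δ * hχ0
  have key : ∀ q : ℝ × ℝ, E q = E (p1, p2) +
      ((q.1 - p1)^2 * α0 + 2*(q.1 - p1)*(q.2 - p2)*α1 + (q.2 - p2)^2 * α2)
      - 2*(q.1 - p1)*(γ - p1*α0 - p2*α1) - 2*(q.2 - p2)*(δ - p1*α1 - p2*α2) := by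
    intro q
    rw [hE, hE, hα0, hα1, hα2, hγ, hδ]
    simp only [Finset.mul_sum, ← Finset.sum_sub_distrib, ← Finset.sum_add_distrib]
    exact Finset.sum_congr rfl fun r _ => by ring
  have key' : ∀ q : ℝ × ℝ, E q = E (p1, p2) +
      ((q.1 - p1)^2 * α0 + 2*(q.1 - p1)*(q.2 - p2)*α1 + (q.2 - p2)^2 * α2) := by
    intro q; rw [key q, hne1, hne2]; ring
  have hQform : ∀ a b : ℝ, 0 ≤ a^2 * α0 + 2*a*b*α1 + b^2 * α2 := by
    intro a b
    have h : α0 * (a^2 * α0 + 2*a*b*α1 + b^2 * α2) = (α0*a + α1*b)^2 + χ0 * b^2 := by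
      rw [hχ0]; ring
    nlinarith [sq_nonneg (α0*a + α1*b), mul_nonneg hχpos.le (sq_nonneg b), hα0pos]
  have hmin : ∀ q : ℝ × ℝ, E (p1, p2) ≤ E q := by
    intro q; rw [key' q]; nlinarith [hQform (q.1 - p1) (q.2 - p2)]
  have huniq : ∀ p : ℝ × ℝ, (∀ q : ℝ × ℝ, E p ≤ E q) → p = (p1, p2) := by
    intro p hp
    have h1 : E p ≤ E (p1, p2) := hp _
    have h2 : E (p1, p2) ≤ E p := hmin p
    have heq : E p = E (p1, p2) := le_antisymm h1 h2
    have hz : (p.1 - p1)^2 * α0 + 2*(p.1 - p1)*(p.2 - p2)*α1 + (p.2 - p2)^2 * α2 = 0 := by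
      have := key' p; rw [heq] at this; linarith
    set a := p.1 - p1 with ha'
    set b := p.2 - p2 with hb'
    have h : (α0*a + α1*b)^2 + χ0 * b^2 = 0 := by
      have hh : α0 * (a^2 * α0 + 2*a*b*α1 + b^2 * α2) = (α0*a + α1*b)^2 + χ0 * b^2 := by
        rw [hχ0]; ring
      rw [hz, mul_zero] at hh; linarith
    have hb2 : χ0 * b^2 = 0 := by
      linarith only [h, sq_nonneg (α0*a + α1*b), mul_nonneg hχpos.le (sq_nonneg b)]
    have hb : b = 0 := by
      rcases mul_eq_zero.mp hb2 with h' | h'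
      · exact absurd h' hχne
      · exact sq_eq_zero_iff.mp h'
    have ha : a = 0 := by
      rw [hb] at h
      have h2' : (α0*a + α1*0)^2 = 0 := by linarith only [h]
      have := sq_eq_zero_iff.mp h2'
      rw [mul_zero, add_zero] at this
      rcases mul_eq_zero.mp this with h' | h'
      · exact absurd h' hα0ne
      · exact h'
    have e1 : p.1 = p1 := by have := ha; rw [ha'] at this; linarith
    have e2 : p.2 = p2 := by have := hb; rw [hb'] at this; linarith
    exact Prod.ext e1 e2
  refine ⟨hχpos, ⟨(p1, p2), hmin, fun p hp => huniq p hp⟩, ?_⟩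
  intro p hp
  have hpe := huniq p hp
  have hsum1 : ∑ r ∈ S, (4 * α2 - 4 * (r : ℝ) * α1 - (r : ℝ) * α0 + α1) * w r * f r
      = 4*α2*γ - 4*α1*δ - α0*δ + α1*γ := by
    rw [hγ, hδ]
    simp only [Finset.mul_sum, ← Finset.sum_sub_distrib, ← Finset.sum_add_distrib]
    exact Finset.sum_congr rfl fun r _ => by ring
  have hsum2 : ∑ r ∈ S, (4 * α2 - 4 * (r : ℝ) * α1 + (r : ℝ) * α0 - α1) * w r * f r
      = 4*α2*γ - 4*α1*δ + α0*δ - α1*γ := by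
    rw [hγ, hδ]
    simp only [Finset.mul_sum, ← Finset.sum_sub_distrib, ← Finset.sum_add_distrib]
    exact Finset.sum_congr rfl fun r _ => by ring
  rw [hpe]
  dsimp only
  constructor
  · rw [hsum1, hp1, hp2]; field_simp; ring
  · rw [hsum2, hp1, hp2]; field_simp; ring
end

section
/- Let n ≥ 2 be an integer, (f_r)_{r=-n}^{n} real data and w_r > 0 for each r ∈ {−n,…,n}. Then λ₀ ≠ 0, and the unique global minimizer (β₀,β₁,β₂) ∈ ℝ³ of ∑_{r=-n}^{n} w_r (f_r − β₀ − β₁r − β₂r²)² satisfies β₀ − (1/4)β₁ + (1/16)β₂ = (α₀/(16λ₀)) ∑_{r=-n}^{n} q₃(r) w_r f_r and β₀ + (1/4)β₁ + (1/16)β₂ = (α₀/(16λ₀)) ∑_{r=-n}^{n} q₁(r) w_r f_r, where q₁(r) = r²α₀α₂ + 4α₀α₄r − 4α₀α₃r² − α₀α₃r − α₂² − 4α₂²r − 16r²α₂² + α₁α₂r + 4α₂α₃ + 4α₁α₂r² + 16α₂α₃r + 16α₂α₄ − 16α₁α₄r + α₁α₃ − 16α₃² − r²α₁² + 16r²α₁α₃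 − 4α₁α₄ and q₃(r) = −16r²α₂² + 16α₂α₄ + 16α₂α₃r − 16α₁α₄r + 16r²α₁α₃ − 16α₃² − 4α₀α₄r + 4α₀α₃r² + 4rα₂² − 4α₂α₃ − 4α₁α₂r² + 4α₁α₄ + r²α₀α₂ − r²α₁² − α₂² − α₀α₃r + α₁α₃ + α₁α₂r; these are the two refinement rules (2.36) of the family of (2n+1)-point schemes D_{2n+1,2}. -/
/-!
The minimization is weighted least squares in the monomial basis `v(t) = (1, t, t²)`. Its normal
matrix is the Hankel matrix `G = (α_{j+k})`, the Gram matrix of the monomials for the weighted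
inner product on the nodes; it is positive definite because a nonzero polynomial of degree `< 3`
cannot vanish at the `2n + 1 ≥ 3` nodes. Hence `det G > 0` and `λ₀ = α₀ det G ≠ 0`. At the
solution `β = G⁻¹ T` of the normal equations (`T_j = ∑ r^j w_r f_r`) the residual splits as
`E(c) = E(β) + (c - β)ᵀ G (c - β)`, so `β` is the unique minimizer, and its value at `t` is
`(det G)⁻¹ ∑ᵣ v(t)ᵀ adj(G) v(r) w_r f_r`. Expanding the adjugate at `t = ∓1/4` gives `q₃` and `q₁`.
-/

open Finset Matrix

namespace WeightedLeastSquares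

variable {ι : Type*} (s : Finset ι) (x w f : ι → ℝ) (m : ℕ)

def monomials (t : ℝ) : Fin m → ℝ := fun j => t ^ (j : ℕ)

def momentMatrix : Matrix (Fin m) (Fin m) ℝ := of fun j k => ∑ i ∈ s, x i ^ (j + k : ℕ) * w i

def dataMoments : Fin m → ℝ := ∑ i ∈ s, (w i * f i) • monomials m (x i)

variable {m}

def residual (c : Fin m → ℝ) : ℝ := ∑ i ∈ s, w i * (f i - c ⬝ᵥ monomials m (x i)) ^ 2

lemma dotProduct_momentMatrix_mulVec (c : Fin m → ℝ) :
    c ⬝ᵥ (momentMatrix s x w m *ᵥ c) = ∑ i ∈ s, w i * (c ⬝ᵥ monomials m (x i)) ^ 2 := by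
  simp only [dotProduct, mulVec, momentMatrix, of_apply, monomials, sq, mul_sum, sum_mul, pow_add]
  refine (sum_congr rfl fun j _ => sum_comm).trans ?_
  rw [sum_comm]
  refine sum_congr rfl fun i _ => ?_
  rw [sum_comm]
  exact sum_congr rfl fun k _ => sum_congr rfl fun j _ => by ring

lemma dotProduct_dataMoments (c : Fin m → ℝ) :
    c ⬝ᵥ dataMoments s x w f m = ∑ i ∈ s, w i * f i * (c ⬝ᵥ monomials m (x i)) := by
  simp only [dataMoments, dotProduct_sum, dotProduct_smul, smul_eq_mul]

lemma momentMatrix_transpose : (momentMatrix s x w m)ᵀ = momentMatrix s x w m := by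
  ext j k
  simp [momentMatrix, add_comm]

lemma momentMatrix_isHermitian : (momentMatrix s x w m).IsHermitian := by
  rw [IsHermitian, conjTranspose_eq_transpose_of_trivial, momentMatrix_transpose]

lemma momentMatrix_posDef (hw : ∀ i ∈ s, 0 < w i) (hx : Set.InjOn x s) (hm : m ≤ #s) :
    (momentMatrix s x w m).PosDef := by
  classical
  refine .of_dotProduct_mulVec_pos (momentMatrix_isHermitian s x w) fun c hc => ?_
  rw [star_trivial, dotProduct_momentMatrix_mulVec]
  have hnonneg : ∀ i ∈ s, 0 ≤ w i * (c ⬝ᵥ monomials m (x i)) ^ 2 :=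
    fun i hi => mul_nonneg (hw i hi).le (sq_nonneg _)
  refine (sum_nonneg hnonneg).lt_of_ne fun hzero => hc ?_
  have hroots : ∀ t ∈ s.image x, (Polynomial.ofFn m c).eval t = 0 := by
    simp only [mem_image, forall_exists_index, and_imp]
    rintro _ i hi rfl
    have := (sum_eq_zero_iff_of_nonneg hnonneg).1 hzero.symm i hi
    rw [mul_eq_zero, sq_eq_zero_iff] at this
    simpa [Polynomial.ofFn_eq_sum_monomial, Polynomial.eval_finsetSum, dotProduct, monomials,
      (hw i hi).ne'] using this
  apply Polynomial.injective_ofFn m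
  rw [map_zero]
  refine Polynomial.eq_zero_of_degree_lt_of_eval_finset_eq_zero _ ?_ hroots
  rw [card_image_of_injOn hx]
  exact (Polynomial.ofFn_degree_lt c).trans_le (by exact_mod_cast hm)

lemma residual_eq (c : Fin m → ℝ) :
    residual s x w f c = ∑ i ∈ s, w i * f i ^ 2 - 2 * (c ⬝ᵥ dataMoments s x w f m)
      + c ⬝ᵥ (momentMatrix s x w m *ᵥ c) := by
  rw [dotProduct_dataMoments, dotProduct_momentMatrix_mulVec, residual, mul_sum, ← sum_sub_distrib,
    ← sum_add_distrib]
  exact sum_congr rfl fun i _ => by ring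

lemma residual_eq_residual_add {β : Fin m → ℝ}
    (hβ : momentMatrix s x w m *ᵥ β = dataMoments s x w f m) (c : Fin m → ℝ) :
    residual s x w f c = residual s x w f β + (c - β) ⬝ᵥ (momentMatrix s x w m *ᵥ (c - β)) := by
  have hsymm : β ⬝ᵥ (momentMatrix s x w m *ᵥ c) = c ⬝ᵥ (momentMatrix s x w m *ᵥ β) := by
    rw [dotProduct_mulVec, ← mulVec_transpose, momentMatrix_transpose, dotProduct_comm]
  rw [residual_eq, residual_eq, ← hβ, mulVec_sub, dotProduct_sub, sub_dotProduct, sub_dotProduct,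
    hsymm]
  ring

lemma forall_residual_le_iff (hG : (momentMatrix s x w m).PosDef) (β' : Fin m → ℝ) :
    (∀ c : Fin m → ℝ, residual s x w f β' ≤ residual s x w f c) ↔
      β' = (momentMatrix s x w m)⁻¹ *ᵥ dataMoments s x w f m := by
  set β := (momentMatrix s x w m)⁻¹ *ᵥ dataMoments s x w f m
  have hβ : momentMatrix s x w m *ᵥ β = dataMoments s x w f m := by
    rw [mulVec_mulVec, mul_nonsing_inv _ hG.det_pos.ne'.isUnit, one_mulVec]
  constructor
  · intro hmin
    by_contra hne
    have hpos := hG.dotProduct_mulVec_pos (sub_ne_zero.2 hne)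
    rw [star_trivial] at hpos
    have := hmin β
    rw [residual_eq_residual_add s x w f hβ β'] at this
    linarith
  · rintro rfl c
    rw [residual_eq_residual_add s x w f hβ c]
    simpa using hG.posSemidef.dotProduct_mulVec_nonneg (c - β)

lemma monomials_dotProduct_inv_mulVec (t : ℝ) :
    monomials m t ⬝ᵥ ((momentMatrix s x w m)⁻¹ *ᵥ dataMoments s x w f m) =
      (momentMatrix s x w m).det⁻¹ * ∑ i ∈ s,
        monomials m t ⬝ᵥ (adjugate (momentMatrix s x w m) *ᵥ monomials m (x i)) * w i * f i := by
  rw [dataMoments, mulVec_sum, dotProduct_sum, mul_sum]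
  refine sum_congr rfl fun i _ => ?_
  rw [mulVec_smul, dotProduct_smul, Matrix.inv_def, smul_mulVec, dotProduct_smul, smul_eq_mul,
    Ring.inverse_eq_inv', smul_eq_mul]
  ring

lemma momentMatrix_three : momentMatrix s x w 3 =
    !![∑ i ∈ s, w i, ∑ i ∈ s, x i * w i, ∑ i ∈ s, x i ^ 2 * w i;
      ∑ i ∈ s, x i * w i, ∑ i ∈ s, x i ^ 2 * w i, ∑ i ∈ s, x i ^ 3 * w i;
      ∑ i ∈ s, x i ^ 2 * w i, ∑ i ∈ s, x i ^ 3 * w i, ∑ i ∈ s, x i ^ 4 * w i] := by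
  ext j k
  fin_cases j <;> fin_cases k <;> simp [momentMatrix]

lemma mul_det_hankel_three (a₀ a₁ a₂ a₃ a₄ : ℝ) :
    a₀ * det !![a₀, a₁, a₂; a₁, a₂, a₃; a₂, a₃, a₄] =
      (a₀ * a₂ - a₁ ^ 2) * (a₀ * a₄ - a₂ ^ 2) - (a₀ * a₃ - a₁ * a₂) ^ 2 := by
  rw [det_fin_three]
  simp only [of_apply, cons_val', cons_val_zero, cons_val_fin_one, cons_val_one, Matrix.cons_val]
  ring

lemma monomials_dotProduct_adjugate_hankel_mulVec (a₀ a₁ a₂ a₃ a₄ t r : ℝ) :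
    monomials 3 t ⬝ᵥ (adjugate !![a₀, a₁, a₂; a₁, a₂, a₃; a₂, a₃, a₄] *ᵥ monomials 3 r) =
      (a₂ * a₄ - a₃ ^ 2) + (a₂ * a₃ - a₁ * a₄) * (t + r) + (a₁ * a₃ - a₂ ^ 2) * (t ^ 2 + r ^ 2)
        + (a₀ * a₄ - a₂ ^ 2) * t * r + (a₁ * a₂ - a₀ * a₃) * t * r * (t + r)
        + (a₀ * a₂ - a₁ ^ 2) * t ^ 2 * r ^ 2 := by
  simp only [dotProduct, monomials, mulVec, adjugate_fin_three, Fin.isValue, of_apply, cons_val',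
    cons_val_one, cons_val_zero, cons_val_fin_one, Matrix.cons_val, Fin.sum_univ_three,
    Fin.coe_ofNat_eq_mod, Nat.zero_mod, pow_zero, mul_one, Nat.one_mod, pow_one, Nat.mod_succ,
    one_mul]
  ring

def tupleEquiv : ℝ × ℝ × ℝ ≃ (Fin 3 → ℝ) where
  toFun p := ![p.1, p.2.1, p.2.2]
  invFun c := (c 0, c 1, c 2)
  left_inv _ := rfl
  right_inv c := by ext j; fin_cases j <;> rfl

lemma tupleEquiv_apply (p : ℝ × ℝ × ℝ) : tupleEquiv p = ![p.1, p.2.1, p.2.2] := rfl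

lemma monomials_dotProduct_tupleEquiv (t : ℝ) (p : ℝ × ℝ × ℝ) :
    monomials 3 t ⬝ᵥ tupleEquiv p = p.1 + p.2.1 * t + p.2.2 * t ^ 2 := by
  simp only [dotProduct, monomials, tupleEquiv_apply, Fin.sum_univ_three, Fin.isValue,
    Fin.coe_ofNat_eq_mod, Nat.zero_mod, pow_zero, cons_val_zero, one_mul, Nat.one_mod, pow_one,
    cons_val_one, Nat.mod_succ, Matrix.cons_val]
  ring

lemma residual_tupleEquiv (p : ℝ × ℝ × ℝ) :
    residual s x w f (tupleEquiv p) =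
      ∑ i ∈ s, w i * (f i - p.1 - p.2.1 * x i - p.2.2 * x i ^ 2) ^ 2 := by
  refine sum_congr rfl fun i _ => ?_
  rw [dotProduct_comm, monomials_dotProduct_tupleEquiv]
  ring

end WeightedLeastSquares

open WeightedLeastSquares

/-- The refinement rules (2.36) of the family of (2n+1)-point schemes `D_{2n+1,2}`:
weighted least squares fitting of a parabola to `(r, f r)`, `r = -n,…,n`,
with positive weights. Then `λ₀ ≠ 0` and the unique minimizer `(β₀, β₁, β₂)`
satisfies the two stated evaluation formulas at `-1/4` and `1/4`. -/
theorem stmt_11 (n : ℤ) (hn : 2 ≤ n) (f w : ℤ → ℝ)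
    (hw : ∀ r ∈ Finset.Icc (-n) n, 0 < w r)
    (α0 α1 α2 α3 α4 χ0 χ1 χ3 lam0 : ℝ)
    (hα0 : α0 = ∑ r ∈ Finset.Icc (-n) n, w r)
    (hα1 : α1 = ∑ r ∈ Finset.Icc (-n) n, (r : ℝ) * w r)
    (hα2 : α2 = ∑ r ∈ Finset.Icc (-n) n, (r : ℝ) ^ 2 * w r)
    (hα3 : α3 = ∑ r ∈ Finset.Icc (-n) n, (r : ℝ) ^ 3 * w r)
    (hα4 : α4 = ∑ r ∈ Finset.Icc (-n) n, (r : ℝ) ^ 4 * w r)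
    (hχ0 : χ0 = α0 * α2 - α1 ^ 2)
    (hχ1 : χ1 = α0 * α3 - α1 * α2)
    (hχ3 : χ3 = α0 * α4 - α2 ^ 2)
    (hlam0 : lam0 = χ0 * χ3 - χ1 ^ 2)
    (E : ℝ × ℝ × ℝ → ℝ)
    (hE : ∀ p : ℝ × ℝ × ℝ, E p = ∑ r ∈ Finset.Icc (-n) n,
      w r * (f r - p.1 - p.2.1 * (r : ℝ) - p.2.2 * (r : ℝ) ^ 2) ^ 2) :
    lam0 ≠ 0 ∧ (∃! p : ℝ × ℝ × ℝ, ∀ q : ℝ × ℝ × ℝ, E p ≤ E q) ∧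
    ∀ p : ℝ × ℝ × ℝ, (∀ q : ℝ × ℝ × ℝ, E p ≤ E q) →
      p.1 - 1 / 4 * p.2.1 + 1 / 16 * p.2.2 =
        (α0 / (16 * lam0)) * ∑ r ∈ Finset.Icc (-n) n,
          (-16 * (r : ℝ) ^ 2 * α2 ^ 2 + 16 * α2 * α4 + 16 * α2 * α3 * (r : ℝ)
            - 16 * α1 * α4 * (r : ℝ) + 16 * (r : ℝ) ^ 2 * α1 * α3 - 16 * α3 ^ 2
            - 4 * α0 * α4 * (r : ℝ) + 4 * α0 * α3 * (r : ℝ) ^ 2 + 4 * (r : ℝ) * α2 ^ 2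
            - 4 * α2 * α3 - 4 * α1 * α2 * (r : ℝ) ^ 2 + 4 * α1 * α4
            + (r : ℝ) ^ 2 * α0 * α2 - (r : ℝ) ^ 2 * α1 ^ 2 - α2 ^ 2
            - α0 * α3 * (r : ℝ) + α1 * α3 + α1 * α2 * (r : ℝ)) * w r * f r ∧
      p.1 + 1 / 4 * p.2.1 + 1 / 16 * p.2.2 =
        (α0 / (16 * lam0)) * ∑ r ∈ Finset.Icc (-n) n,
          ((r : ℝ) ^ 2 * α0 * α2 + 4 * α0 * α4 * (r : ℝ) - 4 * α0 * α3 * (r : ℝ) ^ 2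
            - α0 * α3 * (r : ℝ) - α2 ^ 2 - 4 * α2 ^ 2 * (r : ℝ) - 16 * (r : ℝ) ^ 2 * α2 ^ 2
            + α1 * α2 * (r : ℝ) + 4 * α2 * α3 + 4 * α1 * α2 * (r : ℝ) ^ 2
            + 16 * α2 * α3 * (r : ℝ) + 16 * α2 * α4 - 16 * α1 * α4 * (r : ℝ) + α1 * α3
            - 16 * α3 ^ 2 - (r : ℝ) ^ 2 * α1 ^ 2 + 16 * (r : ℝ) ^ 2 * α1 * α3
            - 4 * α1 * α4) * w r * f r := by
  set s := Icc (-n) n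
  have hGα : momentMatrix s (↑) w 3 = !![α0, α1, α2; α1, α2, α3; α2, α3, α4] :=
    (momentMatrix_three s _ w).trans (by rw [hα0, hα1, hα2, hα3, hα4])
  have hG := momentMatrix_posDef s _ w hw Int.cast_injective.injOn (m := 3) (by simp [s]; omega)
  have hdet := hGα ▸ hG.det_pos
  have hlam : lam0 = α0 * det !![α0, α1, α2; α1, α2, α3; α2, α3, α4] := by
    rw [mul_det_hankel_three, hlam0, hχ0, hχ1, hχ3]
  have hα0pos : 0 < α0 := hα0 ▸ sum_pos hw ⟨0, by simp [s]; omega⟩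
  set β := (momentMatrix s (↑) w 3)⁻¹ *ᵥ dataMoments s (↑) w f 3
  have hmin (p : ℝ × ℝ × ℝ) : (∀ q, E p ≤ E q) ↔ tupleEquiv p = β := by
    simp_rw [hE, ← residual_tupleEquiv]
    exact tupleEquiv.forall_congr_right.trans (forall_residual_le_iff s _ w f hG _)
  have hvalue (p : ℝ × ℝ × ℝ) (hp : ∀ q, E p ≤ E q) (t : ℝ) :
      p.1 + p.2.1 * t + p.2.2 * t ^ 2 = α0 / (16 * lam0) * ∑ r ∈ s, 16 * ((α2 * α4 - α3 ^ 2)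
        + (α2 * α3 - α1 * α4) * (t + r) + (α1 * α3 - α2 ^ 2) * (t ^ 2 + r ^ 2)
        + (α0 * α4 - α2 ^ 2) * t * r + (α1 * α2 - α0 * α3) * t * r * (t + r)
        + (α0 * α2 - α1 ^ 2) * t ^ 2 * r ^ 2) * w r * f r := by
    rw [← monomials_dotProduct_tupleEquiv, (hmin p).1 hp, monomials_dotProduct_inv_mulVec, hGα,
      mul_sum, mul_sum, hlam]
    simp_rw [monomials_dotProduct_adjugate_hankel_mulVec]
    exact sum_congr rfl fun r _ => by field_simp
  refine ⟨hlam ▸ mul_ne_zero hα0pos.ne' hdet.ne',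
    ⟨tupleEquiv.symm β, (hmin _).2 (by simp), fun p hp => by simp [← (hmin p).1 hp]⟩,
    fun p hp => ⟨?_, ?_⟩⟩
  · convert hvalue p hp (-1 / 4) using 1
    · ring
    · exact congrArg _ (sum_congr rfl fun r _ => by ring)
  · convert hvalue p hp (1 / 4) using 1
    · ring
    · exact congrArg _ (sum_congr rfl fun r _ => by ring)
end
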